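/- arXiv:2110.15772 — 7 statements merged into one kernel-verified Lean document; each statement's English description precedes it below -/
import Mathlib

section
/- Let T be a finite tree with nonnegative edge lengths rooted at o, and for X ⊆ V let mst(X) be the cost of the minimal subtree containing X ∪ {o}. Then for any vertex sets X₁, X₂, X₃, X₄: mst(X₁ ∪ X₂ ∪ X₃) + mst(X₂ ∪ X₃ ∪ X₄) ≤ mst(X₁ ∪ X₂) + mst(X₂ ∪ X₃) + mst(X₃ ∪ X₄). -/
open scoped Classical

/-- `mst(X) = Σ_{e ∈ E : V_e ∩ X ≠ ∅} ℓ(e)`: the cost of the minimal subtree of a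
rooted tree containing `X ∪ {o}`, where `Ve e` is the set of vertices strictly
below edge `e`. -/
noncomputable def mstCost {V E : Type*} [Fintype E] (ℓ : E → ℝ) (Ve : E → Set V)
    (X : Set V) : ℝ :=
  ∑ e : E, if (Ve e ∩ X).Nonempty then ℓ e else 0

/-! Each edge contributes `X ↦ [V_e ∩ X ≠ ∅] ℓ(e)`, which turns unions into maxima; the
inequality is then an inequality between maxima of four numbers, checked edge by edge. -/

theorem max_max_add_max_max_le {α : Type*} [AddCommGroup α] [LinearOrder α]
    [IsOrderedAddMonoid α] (a : α) {b c : α} (d : α) (hb : 0 ≤ b) (hc : 0 ≤ c) :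
    max (max a b) c + max (max b c) d ≤ max a b + max b c + max c d := by
  rcases le_total c b with hcb | hbc
  · calc max (max a b) c + max (max b c) d
          = max a b + max (max b c) d := by rw [max_eq_left (hcb.trans (le_max_right a b))]
        _ ≤ max a b + (max b c + max c d) := by
          gcongr
          exact max_le (le_add_of_nonneg_right (le_max_of_le_left hc))
            ((le_max_right c d).trans (le_add_of_nonneg_left (le_max_of_le_left hb)))
        _ = max a b + max b c + max c d := (add_assoc _ _ _).symm
  · calc max (max a b) c + max (max b c) d
          = max (max a b) c + max c d := by rw [max_eq_right hbc]
        _ ≤ max a b + max b c + max c d := by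
          gcongr
          exact max_le (le_add_of_nonneg_right (le_max_of_le_left hb))
            ((le_max_right b c).trans (le_add_of_nonneg_left (le_max_of_le_right hb)))

theorem ite_inter_union_nonempty {V M : Type*} [Zero M] [LinearOrder M] {c : M} (hc : 0 ≤ c) (S X Y : Set V) :
    (if (S ∩ (X ∪ Y)).Nonempty then c else 0) =
      max (if (S ∩ X).Nonempty then c else 0) (if (S ∩ Y).Nonempty then c else 0) := by
  rw [Set.inter_union_distrib_left, Set.union_nonempty]
  split_ifs <;> simp_all

theorem stmt_4 {V E : Type*} [Fintype E] (ℓ : E → ℝ) (hℓ : ∀ e, 0 ≤ ℓ e)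
    (Ve : E → Set V) (X₁ X₂ X₃ X₄ : Set V) :
    mstCost ℓ Ve (X₁ ∪ X₂ ∪ X₃) + mstCost ℓ Ve (X₂ ∪ X₃ ∪ X₄) ≤
      mstCost ℓ Ve (X₁ ∪ X₂) + mstCost ℓ Ve (X₂ ∪ X₃) + mstCost ℓ Ve (X₃ ∪ X₄) := by
  unfold mstCost
  simp only [← Finset.sum_add_distrib]
  refine Finset.sum_le_sum fun e _ => ?_
  simp only [ite_inter_union_nonempty (hℓ e)]
  exact max_max_add_max_max_le _ _ (ite_nonneg (hℓ e) le_rfl) (ite_nonneg (hℓ e) le_rfl)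
end

section
/- Suppose n jobs are scheduled non-preemptively on a single machine by FIFO (first-in-first-out): job j has release time r_j ≥ 0 and processing time p_j ≥ 0, and whenever the machine is idle and there are released unprocessed jobs, it processes the one with the earliest release time. If for every pair of time points a ≤ b the total processing time of jobs released in the interval [a, b] is at most (b − a) + D for some D ≥ 0, then every job completes within D time units of its release time (i.e., maximum flow time ≤ D). -/
/-!
Fix a job `j` and let `a` be the start of the busy period containing `s j`: the earliest start
time `s m ≤ s j` such that the machine is busy throughout `[s m, s j)`. No job released before `a`
can start at or after `a`, for the machine would then be busy from before `a`. By FIFO, every job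
running in `[a, s j)` is released no later than `r j`, so the jobs covering `[a, s j + p j)` are
all released in `[a, r j]`. Hence `s j + p j - a ≤ (r j - a) + D`.
-/

open Set MeasureTheory

section BusyPeriod

variable {ι : Type*}

def busyTime (s p : ι → ℝ) : Set ℝ := ⋃ i, Ico (s i) (s i + p i)

lemma mem_busyTime {s p : ι → ℝ} {t : ℝ} :
    t ∈ busyTime s p ↔ ∃ i, s i ≤ t ∧ t < s i + p i := by
  simp [busyTime]

lemma Ico_subset_busyTime (s p : ι → ℝ) (i : ι) : Ico (s i) (s i + p i) ⊆ busyTime s p :=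
  subset_iUnion (fun i => Ico (s i) (s i + p i)) i

lemma Ico_subset_of_Ico_subset_of_Ico_subset {α : Type*} [LinearOrder α] {S : Set α}
    {x y y' z : α} (hxy : Ico x y ⊆ S) (hyz : Ico y' z ⊆ S) (h : y' ≤ y) : Ico x z ⊆ S := by
  intro t ⟨hxt, htz⟩
  rcases lt_or_ge t y with hty | hyt
  · exact hxy ⟨hxt, hty⟩
  · exact hyz ⟨h.trans hyt, htz⟩

lemma sub_le_sum_of_Ico_subset_biUnion {s p : ι → ℝ} (J : Finset ι) (hp : ∀ i ∈ J, 0 ≤ p i)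
    {a b : ℝ} (hcover : Ico a b ⊆ ⋃ i ∈ J, Ico (s i) (s i + p i)) : b - a ≤ ∑ i ∈ J, p i := by
  have hvol : volume (Ico a b) ≤ ∑ i ∈ J, volume (Ico (s i) (s i + p i)) :=
    (measure_mono hcover).trans (measure_biUnion_finset_le J _)
  simp only [Real.volume_Ico, add_sub_cancel_left] at hvol
  rw [← ENNReal.ofReal_sum_of_nonneg hp,
    ENNReal.ofReal_le_ofReal_iff (Finset.sum_nonneg hp)] at hvol
  exact hvol

lemma exists_busyPeriod_start [Fintype ι] (s p : ι → ℝ) (j : ι) :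
    ∃ a ≤ s j, Ico a (s j) ⊆ busyTime s p ∧
      ∀ k, s k < a → ¬ Ico (s k) (s j) ⊆ busyTime s p := by
  classical
  let B := Finset.univ.filter fun i => s i ≤ s j ∧ Ico (s i) (s j) ⊆ busyTime s p
  have hjB : j ∈ B := by simp [B]
  obtain ⟨m, hmB, hmin⟩ := B.exists_min_image s ⟨j, hjB⟩
  simp only [B, Finset.mem_filter, Finset.mem_univ, true_and] at hmB hmin
  refine ⟨s m, hmB.1, hmB.2, fun k hk hbusy => ?_⟩
  exact (hmin k ⟨hk.le.trans hmB.1, hbusy⟩).not_gt hk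

variable {r p s : ι → ℝ} {a : ℝ} {j : ι}

lemma le_release_of_busyPeriod_start (hbusy : ∀ i, Ico (r i) (s i) ⊆ busyTime s p)
    (ha : Ico a (s j) ⊆ busyTime s p) (hmin : ∀ k, s k < a → ¬ Ico (s k) (s j) ⊆ busyTime s p)
    {i : ι} (hai : a ≤ s i) : a ≤ r i := by
  by_contra! hra
  obtain ⟨k, hkr, hrk⟩ := mem_busyTime.1 (hbusy i ⟨le_rfl, hra.trans_le hai⟩)
  have hk : Ico (s k) (s i) ⊆ busyTime s p :=
    Ico_subset_of_Ico_subset_of_Ico_subset (Ico_subset_busyTime s p k) (hbusy i) hrk.le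
  exact hmin k (hkr.trans_lt hra) (Ico_subset_of_Ico_subset_of_Ico_subset hk ha hai)

lemma Ico_subset_biUnion_of_busyPeriod_start (hfifo : ∀ i j, s i < s j → r i ≤ r j)
    (hbusy : ∀ i, Ico (r i) (s i) ⊆ busyTime s p) (haj : a ≤ s j)
    (ha : Ico a (s j) ⊆ busyTime s p) (hmin : ∀ k, s k < a → ¬ Ico (s k) (s j) ⊆ busyTime s p) :
    Ico a (s j + p j) ⊆ ⋃ i ∈ {i | a ≤ r i ∧ r i ≤ r j}, Ico (s i) (s i + p i) := by
  intro t ⟨hat, ht⟩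
  simp only [mem_iUnion, mem_ofPred_eq, exists_prop]
  rcases lt_or_ge t (s j) with htj | hjt
  · obtain ⟨k, hkt, htk⟩ := mem_busyTime.1 (ha ⟨hat, htj⟩)
    have hak : a ≤ s k := by
      by_contra! hka
      exact hmin k hka <| Ico_subset_of_Ico_subset_of_Ico_subset
        (Ico_subset_busyTime s p k) ha (hat.trans htk.le)
    exact ⟨k, ⟨le_release_of_busyPeriod_start hbusy ha hmin hak,
      hfifo k j (hkt.trans_lt htj)⟩, hkt, htk⟩
  · exact ⟨j, ⟨le_release_of_busyPeriod_start hbusy ha hmin haj, le_rfl⟩, hjt, ht⟩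

theorem flowTime_le_of_fifo [Fintype ι] {D : ℝ} (hp : ∀ i, 0 ≤ p i)
    (hfifo : ∀ i j, s i < s j → r i ≤ r j) (hbusy : ∀ i, Ico (r i) (s i) ⊆ busyTime s p)
    (hbacklog : ∀ a b : ℝ, a ≤ b →
      ∑ i ∈ Finset.univ.filter (fun i => a ≤ r i ∧ r i ≤ b), p i ≤ (b - a) + D)
    (j : ι) : s j + p j - r j ≤ D := by
  obtain ⟨a, haj, ha, hmin⟩ := exists_busyPeriod_start s p j
  have har : a ≤ r j := le_release_of_busyPeriod_start hbusy ha hmin haj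
  have hcover := Ico_subset_biUnion_of_busyPeriod_start hfifo hbusy haj ha hmin
  have hwork : s j + p j - a ≤ ∑ i ∈ Finset.univ.filter (fun i => a ≤ r i ∧ r i ≤ r j), p i :=
    sub_le_sum_of_Ico_subset_biUnion _ (fun i _ => hp i) (by simpa using hcover)
  linarith [hbacklog a (r j) har]

end BusyPeriod

theorem stmt_8_general (n : ℕ) (r p s : Fin n → ℝ) (D : ℝ)
    (hp : ∀ j, 0 ≤ p j)
    (hfifo : ∀ i j, s i < s j → r i ≤ r j)
    (hbusy : ∀ j t, r j ≤ t → t < s j → ∃ i, s i ≤ t ∧ t < s i + p i)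
    (hbacklog : ∀ a b : ℝ, a ≤ b →
      ∑ j ∈ Finset.univ.filter (fun j => a ≤ r j ∧ r j ≤ b), p j ≤ (b - a) + D) :
    ∀ j, s j + p j - r j ≤ D :=
  flowTime_le_of_fifo hp hfifo
    (fun j _ ht => mem_busyTime.2 (hbusy j _ ht.1 ht.2)) hbacklog

/-- FIFO single-machine scheduling: `n` jobs with release times `r j ≥ 0` and
processing times `p j ≥ 0` are started non-preemptively at times `s j`.
The schedule is feasible (`hstart`, `hdisj`), starts jobs in nondecreasing order
of release times (`hfifo`), and never idles while a released unstarted job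
exists (`hbusy`).  If the total processing time of jobs released in any interval
`[a, b]` is at most `(b − a) + D`, then every job has flow time at most `D`. -/
theorem stmt_8 (n : ℕ) (r p s : Fin n → ℝ) (D : ℝ) (hD : 0 ≤ D)
    (hr : ∀ j, 0 ≤ r j) (hp : ∀ j, 0 ≤ p j)
    (hstart : ∀ j, r j ≤ s j)
    (hdisj : ∀ i j, i ≠ j → s i + p i ≤ s j ∨ s j + p j ≤ s i)
    (hfifo : ∀ i j, s i < s j → r i ≤ r j)
    (hbusy : ∀ j t, r j ≤ t → t < s j → ∃ i, s i ≤ t ∧ t < s i + p i)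
    (hbacklog : ∀ a b : ℝ, a ≤ b →
      ∑ j ∈ Finset.univ.filter (fun j => a ≤ r j ∧ r j ≤ b), p j ≤ (b - a) + D) :
    ∀ j, s j + p j - r j ≤ D :=
  stmt_8_general n r p s D hp hfifo hbusy hbacklog
end

section
/- Suppose n jobs are scheduled non-preemptively on k identical machines by FIFO: job j has release time r_j and processing time p_j ≤ P, and whenever a machine is idle and there is a released unprocessed job, it starts the released job with the earliest release time. If for all time points a ≤ b the total processing time of jobs released in [a, b] is at most k(b − a) + D, then every job has flow time at most D/k + 2(k−1)P/k. -/
open scoped Classical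

open Finset Set

/-!
Fix a job `j` and let `a` be the start of the maximal interval ending at `s j` throughout which
all `k` machines are busy; since no machine idles while `j` waits, `a ≤ r j`. The `k (s j - a)`
units of work done in `(a, s j)` belong to jobs started before `j`. Those released at or after
`a` are, by FIFO, released in `[a, r j]`, so together with `j` they weigh at most
`k (r j - a) + D`. Those released before `a` have started by `a` (otherwise the busy interval
would extend to the left) and are still running at `a`, so they sit on distinct machines; they
cannot occupy all `k` machines (again the busy interval would extend to the left), so they weigh
at most `(k - 1) P`. Hence `k (s j + p j - r j) ≤ D + (k - 1) P + (k - 1) p j`.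
-/

variable {ι κ : Type*}

theorem sub_le_sum_of_Ioo_subset_biUnion {S : Finset ι} {x p : ι → ℝ} {a b : ℝ}
    (hp : ∀ i ∈ S, 0 ≤ p i) (h : Ioo a b ⊆ ⋃ i ∈ S, Ico (x i) (x i + p i)) :
    b - a ≤ ∑ i ∈ S, p i := by
  have hvol := (MeasureTheory.measure_mono h).trans
    (MeasureTheory.measure_biUnion_finset_le (μ := MeasureTheory.volume) S _)
  simp only [Real.volume_Ioo, Real.volume_Ico, add_sub_cancel_left] at hvol
  rwa [← ENNReal.ofReal_sum_of_nonneg hp, ENNReal.ofReal_le_ofReal_iff (sum_nonneg hp)] at hvol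

section BusyPeriod

variable (M : ι → κ) (s p : ι → ℝ)

def AllBusy (t : ℝ) : Prop :=
  ∀ m, ∃ i, M i = m ∧ t ∈ Ico (s i) (s i + p i)

def allBusyUntil (b : ℝ) : Set ℝ :=
  {t | t ≤ b ∧ ∀ u ∈ Ico t b, AllBusy M s p u}

-- With no machines every `t ≤ b` qualifies, and `sInf` of that unbounded set is the junk `0`.
noncomputable def busyStart (b : ℝ) : ℝ :=
  sInf (allBusyUntil M s p b)

variable {M s p} {b t u : ℝ}

theorem bddBelow_allBusyUntil [Fintype ι] [Nonempty κ] : BddBelow (allBusyUntil M s p b) := by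
  refine ⟨(insert b (Finset.univ.image s)).min' (insert_nonempty _ _),
    fun t ⟨htb, hbusy⟩ => ?_⟩
  rcases lt_or_ge t b with hlt | hle
  · obtain ⟨i, -, hi, -⟩ := hbusy t ⟨le_rfl, hlt⟩ (Classical.arbitrary κ)
    exact (min'_le _ _ (mem_insert_of_mem (mem_image_of_mem s (mem_univ i)))).trans hi
  · exact (min'_le _ _ (mem_insert_self _ _)).trans hle

theorem busyStart_le [Fintype ι] [Nonempty κ] (htb : t ≤ b)
    (h : ∀ u ∈ Ico t b, AllBusy M s p u) : busyStart M s p b ≤ t :=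
  csInf_le bddBelow_allBusyUntil ⟨htb, h⟩

theorem busyStart_le_self [Fintype ι] [Nonempty κ] : busyStart M s p b ≤ b :=
  busyStart_le le_rfl (by simp)

theorem allBusy_of_busyStart_lt (hu : busyStart M s p b < u) (hub : u < b) :
    AllBusy M s p u := by
  have hne : (allBusyUntil M s p b).Nonempty := ⟨b, le_rfl, by simp⟩
  obtain ⟨t, ⟨-, ht⟩, htu⟩ := exists_lt_of_csInf_lt hne hu
  exact ht u ⟨htu.le, hub⟩

theorem busyStart_le_of_forall_Icc [Fintype ι] [Nonempty κ]
    (h : ∀ u ∈ Icc t (busyStart M s p b), AllBusy M s p u) : busyStart M s p b ≤ t := by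
  by_contra! hta
  refine (busyStart_le (hta.le.trans busyStart_le_self) fun u hu => ?_).not_gt hta
  rcases le_or_gt u (busyStart M s p b) with hua | hua
  · exact h u ⟨hu.1, hua⟩
  · exact allBusy_of_busyStart_lt hua hu.2

end BusyPeriod

variable {M : ι → κ} {r p s : ι → ℝ}

theorem card_mul_le_sum_of_allBusy [Fintype ι] [Fintype κ] {a b : ℝ}
    (hp : ∀ i, 0 ≤ p i) (h : ∀ u ∈ Ioo a b, AllBusy M s p u) :
    Fintype.card κ * (b - a) ≤
      ∑ i ∈ univ.filter (fun i => s i < b ∧ a < s i + p i), p i := by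
  rw [← sum_fiberwise _ M]
  calc (Fintype.card κ : ℝ) * (b - a) = ∑ _m : κ, (b - a) := by
        rw [sum_const, card_univ, nsmul_eq_mul]
    _ ≤ _ := sum_le_sum fun m _ =>
        sub_le_sum_of_Ioo_subset_biUnion (x := s) (fun i _ => hp i) fun u hu => by
          obtain ⟨i, rfl, hi⟩ := h u hu m
          exact mem_biUnion (by simp [hi.1.trans_lt hu.2, hu.1.trans hi.2]) hi

theorem injOn_running
    (hdisj : ∀ i j, i ≠ j → M i = M j → s i + p i ≤ s j ∨ s j + p j ≤ s i)
    (t : ℝ) : InjOn M {i | t ∈ Ico (s i) (s i + p i)} := by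
  intro i hi j hj hM
  by_contra hij
  rcases hdisj i j hij hM with h | h
  · linarith [hi.2, hj.1]
  · linarith [hj.2, hi.1]

theorem sum_running_le [Fintype κ]
    (hdisj : ∀ i j, i ≠ j → M i = M j → s i + p i ≤ s j ∨ s j + p j ≤ s i)
    {P t : ℝ} (hP : ∀ i, p i ≤ P) (hP0 : 0 ≤ P) {B : Finset ι}
    (hB : ∀ i ∈ B, t ∈ Ico (s i) (s i + p i)) {m₀ : κ} (hm₀ : ∀ i ∈ B, M i ≠ m₀) :
    ∑ i ∈ B, p i ≤ (Fintype.card κ - 1) * P := by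
  have hcard : B.card + 1 ≤ Fintype.card κ := by
    rw [← card_image_of_injOn ((injOn_running hdisj t).mono fun i hi => hB i hi),
      ← card_univ, ← card_erase_add_one (mem_univ m₀)]
    gcongr
    intro m hm
    obtain ⟨i, hi, rfl⟩ := mem_image.1 hm
    exact mem_erase.2 ⟨hm₀ i hi, mem_univ _⟩
  calc ∑ i ∈ B, p i ≤ B.card * P := by
        simpa using sum_le_card_nsmul B p P fun i _ => hP i
    _ ≤ (Fintype.card κ - 1) * P := by
        gcongr
        rw [le_sub_iff_add_le]
        exact_mod_cast hcard

section Fifo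

variable [Fintype ι] [Nonempty κ]

theorem busyStart_le_release (hbusy : ∀ i t, r i ≤ t → t < s i → AllBusy M s p t) {j : ι}
    (hj : r j ≤ s j) : busyStart M s p (s j) ≤ r j :=
  busyStart_le hj fun u hu => hbusy j u hu.1 hu.2

theorem start_le_busyStart (hbusy : ∀ i t, r i ≤ t → t < s i → AllBusy M s p t) {b : ℝ}
    {i : ι} (hi : r i < busyStart M s p b) : s i ≤ busyStart M s p b := by
  by_contra! hsi
  exact (busyStart_le_of_forall_Icc fun u hu => hbusy i u hu.1 (hu.2.trans_lt hsi)).not_gt hi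

theorem exists_machine_not_running_released_before [Fintype κ]
    (hbusy : ∀ i t, r i ≤ t → t < s i → AllBusy M s p t) (b : ℝ) :
    ∃ m₀, ∀ i, r i < busyStart M s p b → busyStart M s p b ∈ Ico (s i) (s i + p i) →
      M i ≠ m₀ := by
  by_contra! h
  choose f hfr hfrun hfM using h
  -- then all machines are busy from the latest release time among the `f m` up to the busy start
  have hlast : Finset.univ.sup' univ_nonempty (r ∘ f) < busyStart M s p b :=
    (sup'_lt_iff _).2 fun m _ => hfr m
  refine (busyStart_le_of_forall_Icc fun u hu => ?_).not_gt hlast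
  by_cases hwait : ∃ m, u < s (f m)
  · obtain ⟨m, hm⟩ := hwait
    exact hbusy (f m) u ((le_sup' (r ∘ f) (mem_univ m)).trans hu.1) hm
  · simp only [not_exists, not_lt] at hwait
    exact fun m => ⟨f m, hfM m, hwait m, hu.2.trans_lt (hfrun m).2⟩

theorem card_mul_flow_le [Fintype κ] {P D : ℝ} (hP : ∀ i, p i ≤ P) (hp : ∀ i, 0 ≤ p i)
    (hstart : ∀ i, r i ≤ s i)
    (hdisj : ∀ i j, i ≠ j → M i = M j → s i + p i ≤ s j ∨ s j + p j ≤ s i)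
    (hfifo : ∀ i j, s i < s j → r i ≤ r j)
    (hbusy : ∀ i t, r i ≤ t → t < s i → AllBusy M s p t)
    (hbacklog : ∀ a b : ℝ, a ≤ b →
      ∑ i ∈ univ.filter (fun i => a ≤ r i ∧ r i ≤ b), p i ≤ Fintype.card κ * (b - a) + D)
    (j : ι) :
    Fintype.card κ * (s j + p j - r j) ≤ D + 2 * (Fintype.card κ - 1) * P := by
  set k : ℝ := (Fintype.card κ : ℝ)
  set a := busyStart M s p (s j)
  set C := univ.filter fun i => s i < s j ∧ a < s i + p i
  have haj : a ≤ r j := busyStart_le_release hbusy (hstart j)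
  have hwork : k * (s j - a) ≤ ∑ i ∈ C, p i :=
    card_mul_le_sum_of_allBusy hp fun u hu => allBusy_of_busyStart_lt hu.1 hu.2
  rw [← sum_filter_add_sum_filter_not C (fun i => a ≤ r i)] at hwork
  have hlate : p j + ∑ i ∈ C.filter (fun i => a ≤ r i), p i ≤ k * (r j - a) + D := by
    rw [← sum_insert (by simp [C])]
    refine (sum_le_sum_of_subset_of_nonneg ?_ fun i _ _ => hp i).trans
      (hbacklog a (r j) haj)
    intro i hi
    rcases mem_insert.1 hi with rfl | hi
    · simp [haj]
    · simp only [C, mem_filter, Finset.mem_univ, true_and] at hi ⊢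
      exact ⟨hi.2, hfifo i j hi.1.1⟩
  have hearly : ∑ i ∈ C.filter (fun i => ¬ a ≤ r i), p i ≤ (k - 1) * P := by
    obtain ⟨m₀, hm₀⟩ := exists_machine_not_running_released_before hbusy (s j)
    have hrun : ∀ i ∈ C.filter (fun i => ¬ a ≤ r i),
        r i < a ∧ a ∈ Ico (s i) (s i + p i) := by
      intro i hi
      simp only [C, mem_filter, Finset.mem_univ, true_and, not_le] at hi
      exact ⟨hi.2, start_le_busyStart hbusy hi.2, hi.1.2⟩
    exact sum_running_le hdisj hP ((hp j).trans (hP j)) (fun i hi => (hrun i hi).2)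
      fun i hi => hm₀ i (hrun i hi).1 (hrun i hi).2
  have hk : 0 ≤ k - 1 := sub_nonneg.2 (Nat.one_le_cast.2 Fintype.card_pos)
  calc k * (s j + p j - r j) = k * (s j - a) - k * (r j - a) + k * p j := by ring
    _ ≤ D + (k - 1) * P + (k - 1) * p j := by linarith
    _ ≤ D + 2 * (k - 1) * P := by linarith [mul_le_mul_of_nonneg_left (hP j) hk]

end Fifo

theorem stmt_9_general (n k : ℕ) (r p s : Fin n → ℝ) (M : Fin n → Fin k)
    (P D : ℝ) (hP : ∀ j, p j ≤ P) (hp : ∀ j, 0 ≤ p j)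
    (hstart : ∀ j, r j ≤ s j)
    (hdisj : ∀ i j, i ≠ j → M i = M j → s i + p i ≤ s j ∨ s j + p j ≤ s i)
    (hfifo : ∀ i j, s i < s j → r i ≤ r j)
    (hbusy : ∀ j t, r j ≤ t → t < s j →
      ∀ m : Fin k, ∃ i, M i = m ∧ s i ≤ t ∧ t < s i + p i)
    (hbacklog : ∀ a b : ℝ, a ≤ b →
      ∑ j ∈ Finset.univ.filter (fun j => a ≤ r j ∧ r j ≤ b), p j
        ≤ (k : ℝ) * (b - a) + D) :
    ∀ j, s j + p j - r j ≤ D / (k : ℝ) + 2 * ((k : ℝ) - 1) * P / (k : ℝ) := by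
  intro j
  have : Nonempty (Fin k) := ⟨M j⟩
  have hflow := card_mul_flow_le hP hp hstart hdisj hfifo hbusy
    (by simpa only [Fintype.card_fin] using hbacklog) j
  rw [Fintype.card_fin] at hflow
  rw [← add_div, le_div_iff₀ (Nat.cast_pos.2 (Fin.pos (M j)))]
  linarith

/-- FIFO on `k` identical machines: job `j` runs on machine `M j`, starting at
time `s j ≥ r j`, with processing time `p j ≤ P`; intervals on a given machine
are disjoint, jobs are started in nondecreasing order of release times, and no
machine idles while a released unstarted job exists.  If the total processing
time of jobs released in any `[a, b]` is at most `k(b − a) + D`, then every job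
has flow time at most `D/k + 2(k−1)P/k`. -/
theorem stmt_9 (n k : ℕ) (hk : 1 ≤ k) (r p s : Fin n → ℝ) (M : Fin n → Fin k)
    (P D : ℝ) (hD : 0 ≤ D) (hP : ∀ j, p j ≤ P) (hp : ∀ j, 0 ≤ p j)
    (hr : ∀ j, 0 ≤ r j)
    (hstart : ∀ j, r j ≤ s j)
    (hdisj : ∀ i j, i ≠ j → M i = M j → s i + p i ≤ s j ∨ s j + p j ≤ s i)
    (hfifo : ∀ i j, s i < s j → r i ≤ r j)
    (hbusy : ∀ j t, r j ≤ t → t < s j →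
      ∀ m : Fin k, ∃ i, M i = m ∧ s i ≤ t ∧ t < s i + p i)
    (hbacklog : ∀ a b : ℝ, a ≤ b →
      ∑ j ∈ Finset.univ.filter (fun j => a ≤ r j ∧ r j ≤ b), p j
        ≤ (k : ℝ) * (b - a) + D) :
    ∀ j, s j + p j - r j ≤ D / (k : ℝ) + 2 * ((k : ℝ) - 1) * P / (k : ℝ) :=
  stmt_9_general n k r p s M P D hP hp hstart hdisj hfifo hbusy hbacklog
end

section
/- In a rooted tree T with edge lengths and depot o, fix F > 0 and a set R' of requests at vertices. Suppose R' is served by a collection 𝒫 of subtrees (trips) of T, each containing o and having total edge length at most F. Then for every edge e = (u, v) with v the child, the number of subtrees in 𝒫 containing e is at least ⌈mst_e(R')/F⌉, where mst_e(R') is the total length of the minimal subtree of T containing o and all request locations of R' that are descendants of e. -/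
open scoped Classical

/-!
Every edge `u` of the minimal subtree spanned by `o` and the requests below `v` lies on the
path from some such request `w` to the root. A trip serving `w` is closed under `parent`, so it
contains that whole path: both the edge `u` and the edge `v`. Hence the minimal subtree is
covered by the trips through `v`, each of length at most `F`, and its length is at most `F`
times their number.
-/

namespace Finset

variable {ι β M : Type*} [AddCommMonoid M] [PartialOrder M] [IsOrderedAddMonoid M]

theorem sum_biUnion_le_sum_sum [DecidableEq β] {I : Finset ι} {t : ι → Finset β} {f : β → M}
    (hf : ∀ i ∈ I, ∀ b ∈ t i, 0 ≤ f b) :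
    ∑ b ∈ I.biUnion t, f b ≤ ∑ i ∈ I, ∑ b ∈ t i, f b := by
  induction I using Finset.induction_on with
  | empty => simp
  | @insert a I ha ih =>
    have hfa : ∀ b ∈ t a ∩ I.biUnion t, 0 ≤ f b := fun b hb ↦
      hf a (mem_insert_self a I) b (mem_inter.1 hb).1
    rw [biUnion_insert, sum_insert ha]
    calc ∑ b ∈ t a ∪ I.biUnion t, f b
        ≤ ∑ b ∈ t a ∪ I.biUnion t, f b + ∑ b ∈ t a ∩ I.biUnion t, f b :=
          le_add_of_nonneg_right (sum_nonneg hfa)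
      _ = ∑ b ∈ t a, f b + ∑ b ∈ I.biUnion t, f b := sum_union_inter
      _ ≤ ∑ b ∈ t a, f b + ∑ i ∈ I, ∑ b ∈ t i, f b :=
          add_le_add_right (ih fun i hi ↦ hf i (mem_insert_of_mem hi)) _

theorem sum_le_card_nsmul_of_subset_biUnion [DecidableEq β] {s : Finset β}
    {I : Finset ι} {t : ι → Finset β} {f : β → M} {F : M} (hs : s ⊆ I.biUnion t)
    (hf : ∀ i ∈ I, ∀ b ∈ t i, 0 ≤ f b) (hF : ∀ i ∈ I, ∑ b ∈ t i, f b ≤ F) :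
    ∑ b ∈ s, f b ≤ #I • F := by
  calc ∑ b ∈ s, f b ≤ ∑ b ∈ I.biUnion t, f b :=
        sum_le_sum_of_subset_of_nonneg hs fun b hb _ ↦
          let ⟨i, hi, hb⟩ := mem_biUnion.1 hb; hf i hi b hb
    _ ≤ ∑ i ∈ I, ∑ b ∈ t i, f b := sum_biUnion_le_sum_sum hf
    _ ≤ #I • F := sum_le_card_nsmul I _ F hF

end Finset

theorem stmt_11_general {V : Type*} [Fintype V] (o : V) (parent : V → V) (ℓ : V → ℝ)
    (F : ℝ) (hF : 0 < F)
    (hℓ : ∀ v, v ≠ o → 0 < ℓ v)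
    (R' : Finset V)
    {ι : Type*} [Fintype ι] (P : ι → Finset V)
    (htripClosed : ∀ i, ∀ u ∈ P i, parent u ∈ P i)
    (htripLen : ∀ i, ∑ u ∈ (P i).filter (fun u => u ≠ o), ℓ u ≤ F)
    (hcover : ∀ w ∈ R', ∃ i, w ∈ P i)
    (v : V) :
    ⌈(∑ u ∈ Finset.univ.filter (fun u => u ≠ o ∧
        ∃ w ∈ R', (∃ n, parent^[n] w = v) ∧ ∃ m, parent^[m] w = u), ℓ u) / F⌉
      ≤ ((Finset.univ.filter (fun i => v ∈ P i)).card : ℤ) := by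
  have hcovered : Finset.univ.filter (fun u => u ≠ o ∧
        ∃ w ∈ R', (∃ n, parent^[n] w = v) ∧ ∃ m, parent^[m] w = u) ⊆
      (Finset.univ.filter (fun i => v ∈ P i)).biUnion (fun i => (P i).filter (· ≠ o)) := by
    intro u hu
    simp only [Finset.mem_filter, Finset.mem_univ, true_and] at hu
    obtain ⟨hu, w, hw, ⟨n, rfl⟩, m, rfl⟩ := hu
    obtain ⟨i, hi⟩ := hcover w hw
    have hpath : ∀ k, parent^[k] w ∈ P i := fun k ↦
      Set.MapsTo.iterate (f := parent) (s := ↑(P i)) (htripClosed i) k hi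
    simp only [Finset.mem_biUnion, Finset.mem_filter, Finset.mem_univ, true_and]
    exact ⟨i, hpath n, hpath m, hu⟩
  rw [Int.ceil_le, Int.cast_natCast, div_le_iff₀ hF, ← nsmul_eq_mul]
  exact Finset.sum_le_card_nsmul_of_subset_biUnion hcovered
    (fun _ _ u hu ↦ (hℓ u (Finset.mem_filter.1 hu).2).le) (fun i _ ↦ htripLen i)

/-- A rooted tree on a finite vertex set `V` is given by parent pointers:
`parent o = o` and every vertex reaches the root `o` by iterating `parent`.
Each non-root vertex `u` stands for the edge `(parent u, u)` of positive
length `ℓ u`; `w` is a descendant of `u` iff `parent^[n] w = u` for some `n`.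
Every vertex is within distance `F` of `o` (`hdist`).  The requests `R'` are
served by trips `P i`, each a subtree containing `o` (a parent-closed vertex set)
of total edge length at most `F`.  Then for every edge, with child endpoint
`v ≠ o`, the number of trips containing the edge is at least
`⌈mst_e(R')/F⌉`, where `mst_e(R')` is the total length of the minimal subtree
containing `o` and the requests of `R'` below `v`. -/
theorem stmt_11 {V : Type*} [Fintype V] (o : V) (parent : V → V) (ℓ : V → ℝ)
    (F : ℝ) (hF : 0 < F)
    (hroot : parent o = o) (htree : ∀ v, ∃ n, parent^[n] v = o)
    (hℓ : ∀ v, v ≠ o → 0 < ℓ v)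
    (hdist : ∀ v : V,
      ∑ u ∈ Finset.univ.filter (fun u => u ≠ o ∧ ∃ n, parent^[n] v = u), ℓ u ≤ F)
    (R' : Finset V)
    {ι : Type*} [Fintype ι] (P : ι → Finset V)
    (htripRoot : ∀ i, o ∈ P i)
    (htripClosed : ∀ i, ∀ u ∈ P i, parent u ∈ P i)
    (htripLen : ∀ i, ∑ u ∈ (P i).filter (fun u => u ≠ o), ℓ u ≤ F)
    (hcover : ∀ w ∈ R', ∃ i, w ∈ P i)
    (v : V) (hv : v ≠ o) :
    ⌈(∑ u ∈ Finset.univ.filter (fun u => u ≠ o ∧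
        ∃ w ∈ R', (∃ n, parent^[n] w = v) ∧ ∃ m, parent^[m] w = u), ℓ u) / F⌉
      ≤ ((Finset.univ.filter (fun i => v ∈ P i)).card : ℤ) :=
  stmt_11_general o parent ℓ F hF hℓ R' P htripClosed htripLen hcover v
end

section
/- Fix F > 0. For finite subsets X, X' of vertices of a rooted tree with edge lengths, define for each edge e: c(X, e | X') = ⌈mst_e(X)/F⌉ if V_e ∩ X' = ∅, and ⌊(mst_e(X'∪X) − mst_e(X'))/F⌋ otherwise. Then for all sets X₁, X₂, X₃ and every edge e: c(X₁ ∪ X₂, e | X₃) ≤ ⌈mst_e(X₁)/F⌉ + c(X₂, e | X₃). -/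
open scoped Classical

/-! `mst_e` is subadditive, since the edges counted for `A ∪ B` are those counted for `A` or for
`B`. When some point of `X₃` lies below `e`, subtracting `mst_e(X₃)` from
`mst_e(X₁ ∪ (X₃ ∪ X₂)) ≤ mst_e(X₁) + mst_e(X₃ ∪ X₂)` and dividing by `F` reduces the claim to
`⌊a + b⌋ ≤ ⌈a⌉ + ⌊b⌋`; otherwise `mst_e(X₁ ∪ X₂) ≤ mst_e(X₁) + mst_e(X₂)` reduces it to
`⌈a + b⌉ ≤ ⌈a⌉ + ⌈b⌉`. -/

/-- `mste o parent ℓ v X` is the cost `mst_e(X)` of the minimal subtree of the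
rooted tree (given by parent pointers, root `o`, edge `(parent u, u)` of length
`ℓ u` for `u ≠ o`) containing `o` and the points of `X` below the edge with child
endpoint `v`: an edge with child `u` is counted iff some `w ∈ X` is a descendant
of both `v` and `u`. -/
noncomputable def mste {V : Type*} [Fintype V] (o : V) (parent : V → V)
    (ℓ : V → ℝ) (v : V) (X : Set V) : ℝ :=
  ∑ u ∈ Finset.univ.filter (fun u => u ≠ o ∧
      ∃ w ∈ X, (∃ n, parent^[n] w = v) ∧ ∃ m, parent^[m] w = u), ℓ u

theorem Finset.sum_union_le_of_nonneg {ι M : Type*} [DecidableEq ι] [AddCommMonoid M]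
    [PartialOrder M] [IsOrderedAddMonoid M] {f : ι → M}
    (hf : ∀ i, 0 ≤ f i) (s t : Finset ι) :
    ∑ i ∈ s ∪ t, f i ≤ ∑ i ∈ s, f i + ∑ i ∈ t, f i := by
  rw [← Finset.sum_union_inter]
  exact le_add_of_nonneg_right (Finset.sum_nonneg fun i _ => hf i)

theorem mste_union_le {V : Type*} [Fintype V] (o : V) (parent : V → V) (ℓ : V → ℝ) (v : V)
    (hℓ : ∀ u, 0 ≤ ℓ u) (A B : Set V) :
    mste o parent ℓ v (A ∪ B) ≤ mste o parent ℓ v A + mste o parent ℓ v B := by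
  unfold mste
  refine le_of_eq_of_le ?_ (Finset.sum_union_le_of_nonneg hℓ _ _)
  congr 1
  ext u
  simp only [Finset.mem_filter, Finset.mem_union, Finset.mem_univ, true_and, Set.mem_union,
    or_and_right, exists_or, and_or_left]

section FloorDiv

variable {K : Type*} [Field K] [LinearOrder K] [IsStrictOrderedRing K] [FloorRing K]

theorem Int.floor_add_le_ceil_add_floor (a b : K) : ⌊a + b⌋ ≤ ⌈a⌉ + ⌊b⌋ := by
  rw [← Int.floor_intCast_add]
  exact Int.floor_le_floor (by gcongr; exact Int.le_ceil a)

theorem Int.floor_div_le_ceil_div_add_floor_div {x a y F : K} (hF : 0 ≤ F) (h : x ≤ a + y) :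
    ⌊x / F⌋ ≤ ⌈a / F⌉ + ⌊y / F⌋ :=
  calc ⌊x / F⌋ ≤ ⌊a / F + y / F⌋ := by rw [← add_div]; gcongr
    _ ≤ ⌈a / F⌉ + ⌊y / F⌋ := Int.floor_add_le_ceil_add_floor _ _

theorem Int.ceil_div_le_ceil_div_add_ceil_div {x a y F : K} (hF : 0 ≤ F) (h : x ≤ a + y) :
    ⌈x / F⌉ ≤ ⌈a / F⌉ + ⌈y / F⌉ :=
  calc ⌈x / F⌉ ≤ ⌈a / F + y / F⌉ := by rw [← add_div]; gcongr
    _ ≤ ⌈a / F⌉ + ⌈y / F⌉ := Int.ceil_add_le _ _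

end FloorDiv

theorem stmt_17_general {V : Type*} [Fintype V] (o : V) (parent : V → V) (ℓ : V → ℝ)
    (hℓ : ∀ v, 0 ≤ ℓ v) (F : ℝ) (hF : 0 < F)
    (X₁ X₂ X₃ : Set V) (v : V) :
    (if ∃ w ∈ X₃, ∃ n, parent^[n] w = v
      then ⌊(mste o parent ℓ v (X₃ ∪ (X₁ ∪ X₂)) - mste o parent ℓ v X₃) / F⌋
      else ⌈mste o parent ℓ v (X₁ ∪ X₂) / F⌉)
    ≤ ⌈mste o parent ℓ v X₁ / F⌉ +
      (if ∃ w ∈ X₃, ∃ n, parent^[n] w = v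
        then ⌊(mste o parent ℓ v (X₃ ∪ X₂) - mste o parent ℓ v X₃) / F⌋
        else ⌈mste o parent ℓ v X₂ / F⌉) := by
  have hX₁X₂ := mste_union_le o parent ℓ v hℓ X₁ X₂
  have hX₁X₃X₂ : mste o parent ℓ v (X₃ ∪ (X₁ ∪ X₂)) ≤
      mste o parent ℓ v X₁ + mste o parent ℓ v (X₃ ∪ X₂) := by
    rw [Set.union_left_comm]
    exact mste_union_le o parent ℓ v hℓ X₁ (X₃ ∪ X₂)
  split_ifs
  · exact Int.floor_div_le_ceil_div_add_floor_div hF.le (by linarith)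
  · exact Int.ceil_div_le_ceil_div_add_ceil_div hF.le hX₁X₂

/-- With `c(X, e | X') = ⌈mst_e(X)/F⌉` if no point of `X'` lies below `e`, and
`⌊(mst_e(X' ∪ X) − mst_e(X'))/F⌋` otherwise, we have
`c(X₁ ∪ X₂, e | X₃) ≤ ⌈mst_e(X₁)/F⌉ + c(X₂, e | X₃)` for every edge `e`
(with child endpoint `v ≠ o`). -/
theorem stmt_17 {V : Type*} [Fintype V] (o : V) (parent : V → V) (ℓ : V → ℝ)
    (hroot : parent o = o) (htree : ∀ v, ∃ n, parent^[n] v = o)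
    (hℓ : ∀ v, 0 ≤ ℓ v) (F : ℝ) (hF : 0 < F)
    (X₁ X₂ X₃ : Set V) (v : V) (hv : v ≠ o) :
    (if ∃ w ∈ X₃, ∃ n, parent^[n] w = v
      then ⌊(mste o parent ℓ v (X₃ ∪ (X₁ ∪ X₂)) - mste o parent ℓ v X₃) / F⌋
      else ⌈mste o parent ℓ v (X₁ ∪ X₂) / F⌉)
    ≤ ⌈mste o parent ℓ v X₁ / F⌉ +
      (if ∃ w ∈ X₃, ∃ n, parent^[n] w = v
        then ⌊(mste o parent ℓ v (X₃ ∪ X₂) - mste o parent ℓ v X₃) / F⌋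
        else ⌈mste o parent ℓ v X₂ / F⌉) :=
  stmt_17_general o parent ℓ hℓ F hF X₁ X₂ X₃ v
end

section
/- Fix F > 0. For all vertex sets X₁, X₂, X₃, X₄ and every edge e of the rooted tree, if V_e ∩ (X₂ ∪ X₃) ≠ ∅ then ⌈mst_e(X₂∪X₃)/F⌉ + ⌊(mst_e(X₁∪X₂∪X₃) − mst_e(X₂∪X₃))/F⌋ + ⌊(mst_e(X₂∪X₃∪X₄) − mst_e(X₂∪X₃))/F⌋ ≤ ⌈mst_e(X₁∪X₂)/F⌉ + ⌈mst_e(X₃∪X₄)/F⌉. -/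
open scoped Classical

private lemma ceil_add_floor_le' (x y : ℝ) : ⌈x⌉ + ⌊y⌋ ≤ ⌈x + y⌉ := by
  have h1 := Int.le_ceil (x + y)
  have h2 := Int.floor_le y
  have h3 : x ≤ ((⌈x + y⌉ - ⌊y⌋ : ℤ) : ℝ) := by push_cast; linarith
  have := Int.ceil_le.2 h3
  omega

theorem stmt_18 {V : Type*} [Fintype V] (o : V) (parent : V → V) (ℓ : V → ℝ)
    (hroot : parent o = o) (htree : ∀ v, ∃ n, parent^[n] v = o)
    (hℓ : ∀ v, 0 ≤ ℓ v) (F : ℝ) (hF : 0 < F)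
    (X₁ X₂ X₃ X₄ : Set V) (v : V) (hv : v ≠ o)
    (hne : ∃ w ∈ X₂ ∪ X₃, ∃ n, parent^[n] w = v) :
    ⌈mste o parent ℓ v (X₂ ∪ X₃) / F⌉ +
      ⌊(mste o parent ℓ v (X₁ ∪ X₂ ∪ X₃) - mste o parent ℓ v (X₂ ∪ X₃)) / F⌋ +
      ⌊(mste o parent ℓ v (X₂ ∪ X₃ ∪ X₄) - mste o parent ℓ v (X₂ ∪ X₃)) / F⌋
    ≤ ⌈mste o parent ℓ v (X₁ ∪ X₂) / F⌉ + ⌈mste o parent ℓ v (X₃ ∪ X₄) / F⌉ := by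
  classical
  set S : Set V → Finset V := fun X => Finset.univ.filter (fun u => u ≠ o ∧
      ∃ w ∈ X, (∃ n, parent^[n] w = v) ∧ ∃ m, parent^[m] w = u) with hS
  have hmste : ∀ X, mste o parent ℓ v X = ∑ u ∈ S X, ℓ u := fun X => rfl
  set μ : Finset V → ℝ := fun s => ∑ u ∈ s, ℓ u with hμ
  have hSU : ∀ A B : Set V, S (A ∪ B) = S A ∪ S B := by
    intro A B
    ext u
    simp only [hS, Finset.mem_filter, Finset.mem_union, Set.mem_union]
    constructor
    · rintro ⟨h1, ⟨huo, w, (hw | hw), hrest⟩⟩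
      · exact Or.inl ⟨h1, huo, w, hw, hrest⟩
      · exact Or.inr ⟨h1, huo, w, hw, hrest⟩
    · rintro (⟨h1, huo, w, hw, hrest⟩ | ⟨h1, huo, w, hw, hrest⟩)
      · exact ⟨h1, huo, w, Or.inl hw, hrest⟩
      · exact ⟨h1, huo, w, Or.inr hw, hrest⟩
  have hmono : ∀ s t : Finset V, s ⊆ t → μ s ≤ μ t := fun s t h =>
    Finset.sum_le_sum_of_subset_of_nonneg h (fun u _ _ => hℓ u)
  -- notation
  set T1 := S X₁
  set T2 := S X₂
  set T3 := S X₃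
  set T4 := S X₄
  have ha : mste o parent ℓ v (X₂ ∪ X₃) = μ (T2 ∪ T3) := by
    rw [hmste, hSU]
  have hp : mste o parent ℓ v (X₁ ∪ X₂) = μ (T1 ∪ T2) := by
    rw [hmste, hSU]
  have hq : mste o parent ℓ v (X₃ ∪ X₄) = μ (T3 ∪ T4) := by
    rw [hmste, hSU]
  have hb : mste o parent ℓ v (X₁ ∪ X₂ ∪ X₃) = μ ((T1 ∪ T2) ∪ T3) := by
    rw [hmste, hSU, hSU]
  have hc : mste o parent ℓ v (X₂ ∪ X₃ ∪ X₄) = μ ((T2 ∪ T3) ∪ T4) := by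
    rw [hmste, hSU, hSU]
  set a := μ (T2 ∪ T3)
  set p := μ (T1 ∪ T2)
  set q := μ (T3 ∪ T4)
  set b := μ ((T1 ∪ T2) ∪ T3)
  set c := μ ((T2 ∪ T3) ∪ T4)
  -- key real inequality: b + c ≤ a + p + q
  have hbeq : b = p + μ (T3 \ (T1 ∪ T2)) := by
    show μ ((T1 ∪ T2) ∪ T3) = p + μ (T3 \ (T1 ∪ T2))
    rw [show (T1 ∪ T2) ∪ T3 = (T1 ∪ T2) ∪ (T3 \ (T1 ∪ T2)) by
      rw [Finset.union_sdiff_self_eq_union]]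
    exact Finset.sum_union Finset.disjoint_sdiff
  have hceq : c ≤ q + μ (T2 \ (T3 ∪ T4)) := by
    have h1 : (T2 ∪ T3) ∪ T4 ⊆ (T3 ∪ T4) ∪ (T2 \ (T3 ∪ T4)) := by
      intro u hu
      simp only [Finset.mem_union, Finset.mem_sdiff] at hu ⊢
      tauto
    calc c ≤ μ ((T3 ∪ T4) ∪ (T2 \ (T3 ∪ T4))) := hmono _ _ h1
      _ = q + μ (T2 \ (T3 ∪ T4)) := Finset.sum_union Finset.disjoint_sdiff
  have hdisj : Disjoint (T3 \ (T1 ∪ T2)) (T2 \ (T3 ∪ T4)) := by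
    rw [Finset.disjoint_left]
    intro u hu1 hu2
    simp only [Finset.mem_sdiff, Finset.mem_union] at hu1 hu2
    tauto
  have hsub : (T3 \ (T1 ∪ T2)) ∪ (T2 \ (T3 ∪ T4)) ⊆ T2 ∪ T3 := by
    intro u hu
    simp only [Finset.mem_union, Finset.mem_sdiff] at hu ⊢
    tauto
  have hsum : μ (T3 \ (T1 ∪ T2)) + μ (T2 \ (T3 ∪ T4)) ≤ a := by
    calc μ (T3 \ (T1 ∪ T2)) + μ (T2 \ (T3 ∪ T4))
        = μ ((T3 \ (T1 ∪ T2)) ∪ (T2 \ (T3 ∪ T4))) := (Finset.sum_union hdisj).symm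
      _ ≤ a := hmono _ _ hsub
  have key : b + c ≤ a + p + q := by linarith
  -- integer arithmetic
  rw [ha, hb, hc, hp, hq]
  calc ⌈a / F⌉ + ⌊(b - a) / F⌋ + ⌊(c - a) / F⌋
      ≤ ⌈a / F + (b - a) / F⌉ + ⌊(c - a) / F⌋ := by
        exact add_le_add (ceil_add_floor_le' _ _) le_rfl
    _ ≤ ⌈a / F + (b - a) / F + (c - a) / F⌉ := ceil_add_floor_le' _ _
    _ = ⌈(b + c - a) / F⌉ := by ring_nf
    _ ≤ ⌈(p + q) / F⌉ := by
        apply Int.ceil_mono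
        gcongr
        linarith
    _ = ⌈p / F + q / F⌉ := by ring_nf
    _ ≤ ⌈p / F⌉ + ⌈q / F⌉ := Int.ceil_add_le _ _
end

section
/- Consider a single machine and jobs released over time where job j has release time r_j and size p_j. In the FIFO schedule (k = 1 case of the multi-machine lemma), if the total size of jobs released in any interval [a, b] is at most (b − a) + D, then FIFO is an optimal non-preemptive schedule for minimizing maximum flow time and achieves maximum flow time at most D; moreover any schedule has maximum flow time at least (Σ_{j released in [a,b]} p_j − (b − a)) for some witness interval, so D is tight when attained. -/
/-!
Lower bound: the jobs released in `[a, b]` occupy disjoint intervals of total length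
`∑ p` after time `a`, so the last of them completes at or after `a + ∑ p`, hence has flow
time at least `∑ p - (b - a)`.

Upper bound for FIFO: follow the chain of jobs that end exactly when the next one starts
back from `j` to a job started at its own release time `a`. The machine is busy from `a`
until `j` completes, and by the FIFO rule every job run there is released in `[a, r j]`,
so the flow time of `j` is at most the lower bound for the interval `[a, r j]`. This gives
both the bound `D` and the optimality of FIFO.
-/

open scoped Classical

open Finset Function MeasureTheory

variable {ι : Type*}

def NonOverlapping (σ p : ι → ℝ) : Prop :=
  ∀ i j, i ≠ j → σ i + p i ≤ σ j ∨ σ j + p j ≤ σ i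

noncomputable def releasedIn [Fintype ι] (r : ι → ℝ) (a b : ℝ) : Finset ι :=
  univ.filter fun j => a ≤ r j ∧ r j ≤ b

@[simp]
theorem mem_releasedIn [Fintype ι] {r : ι → ℝ} {a b : ℝ} {j : ι} :
    j ∈ releasedIn r a b ↔ a ≤ r j ∧ r j ≤ b := by
  simp [releasedIn]

namespace NonOverlapping

variable {σ p : ι → ℝ}

theorem pairwise_disjoint_Ico (h : NonOverlapping σ p) :
    Pairwise (Disjoint on (fun i => Set.Ico (σ i) (σ i + p i))) := by
  intro i j hij
  rcases h i j hij with hle | hle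
  · exact Set.Ico_disjoint_Ico.2 (by simp [hle])
  · exact Set.Ico_disjoint_Ico.2 (by simp [hle])

theorem sum_le_sub (h : NonOverlapping σ p) (hp : ∀ i, 0 ≤ p i) {S : Finset ι} {a C : ℝ}
    (ha : ∀ i ∈ S, a ≤ σ i) (hC : ∀ i ∈ S, σ i + p i ≤ C) (haC : a ≤ C) :
    ∑ i ∈ S, p i ≤ C - a := by
  have hunion :
      volume (⋃ i ∈ S, Set.Ico (σ i) (σ i + p i)) = ENNReal.ofReal (∑ i ∈ S, p i) := by
    rw [measure_biUnion_finset (h.pairwise_disjoint_Ico.set_pairwise _)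
      (fun _ _ => measurableSet_Ico), ENNReal.ofReal_sum_of_nonneg (fun i _ => hp i)]
    simp [Real.volume_Ico]
  have hsub : (⋃ i ∈ S, Set.Ico (σ i) (σ i + p i)) ⊆ Set.Ico a C := by
    simp only [Set.iUnion_subset_iff]
    exact fun i hi => Set.Ico_subset_Ico (ha i hi) (hC i hi)
  have hmono := measure_mono (μ := volume) hsub
  rwa [hunion, Real.volume_Ico, ENNReal.ofReal_le_ofReal_iff (sub_nonneg.2 haC)] at hmono

end NonOverlapping

theorem exists_flow_ge_sum_releasedIn_sub [Fintype ι] [Nonempty ι] {r p σ : ι → ℝ}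
    (hp : ∀ i, 0 ≤ p i) (hstart : ∀ j, r j ≤ σ j) (hσ : NonOverlapping σ p)
    {a b : ℝ} (hab : a ≤ b) :
    ∃ j, ∑ i ∈ releasedIn r a b, p i - (b - a) ≤ σ j + p j - r j := by
  rcases (releasedIn r a b).eq_empty_or_nonempty with hS | hS
  · obtain ⟨j⟩ := ‹Nonempty ι›
    refine ⟨j, ?_⟩
    rw [hS, sum_empty]
    linarith [hstart j, hp j]
  · obtain ⟨j, hj, hlast⟩ := (releasedIn r a b).exists_max_image (fun i => σ i + p i) hS
    rw [mem_releasedIn] at hj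
    have hsum := hσ.sum_le_sub hp (fun i hi => (mem_releasedIn.1 hi).1.trans (hstart i)) hlast
      (by linarith [hstart j, hp j])
    exact ⟨j, by linarith⟩

section FIFO

variable [Fintype ι] {r p s : ι → ℝ}

theorem exists_completion_eq_start (hp : ∀ i, 0 ≤ p i) (hdisj : NonOverlapping s p)
    (hbusy : ∀ j t, r j ≤ t → t < s j → ∃ i, s i ≤ t ∧ t < s i + p i)
    {j : ι} (hj : r j < s j) : ∃ i, s i < s j ∧ s i + p i = s j := by
  obtain ⟨w, hws, hwp⟩ := hbusy j (r j) le_rfl hj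
  have hearlier : ∀ {k}, s k < s j → k ∈ univ.filter fun i => s i < s j := by simp
  obtain ⟨i, hi, hlast⟩ := (univ.filter fun i => s i < s j).exists_max_image
    (fun i => s i + p i) ⟨w, hearlier (hws.trans_lt hj)⟩
  have hi : s i < s j := (mem_filter.1 hi).2
  refine ⟨i, hi, le_antisymm ?_ ?_⟩
  · rcases hdisj i j (fun h => hi.ne (h ▸ rfl)) with h | h
    · exact h
    · linarith [hp j]
  -- otherwise the machine would idle right after the latest completion before `s j`
  · by_contra! hidle
    obtain ⟨k, hks, hkp⟩ :=
      hbusy j _ (hwp.le.trans (hlast w (hearlier (hws.trans_lt hj)))) hidle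
    exact (hlast k (hearlier (hks.trans_lt hidle))).not_gt hkp

theorem exists_completion_le_add_sum_releasedIn_started (hp : ∀ i, 0 ≤ p i)
    (hstart : ∀ j, r j ≤ s j) (hdisj : NonOverlapping s p)
    (hfifo : ∀ i j, s i < s j → r i ≤ r j)
    (hbusy : ∀ j t, r j ≤ t → t < s j → ∃ i, s i ≤ t ∧ t < s i + p i) (j : ι) :
    ∃ a ≤ r j, s j + p j ≤ a + ∑ i ∈ (releasedIn r a (r j)).filter (s · ≤ s j), p i := by
  induction j using (Finite.wellFounded_of_trans_of_irrefl (InvImage (· < ·) s)).induction with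
  | _ j ih =>
    rcases (hstart j).eq_or_lt with hrs | hrs
    · refine ⟨r j, le_rfl, ?_⟩
      have hj : j ∈ (releasedIn r (r j) (r j)).filter (s · ≤ s j) := by simp
      linarith [single_le_sum (fun i _ => hp i) hj]
    · obtain ⟨i, hij, hend⟩ := exists_completion_eq_start hp hdisj hbusy hrs
      obtain ⟨a, hai, hi⟩ := ih i hij
      have hrij := hfifo i j hij
      have hj : j ∉ (releasedIn r a (r i)).filter (s · ≤ s i) := by simp [hij]
      have hsub : insert j ((releasedIn r a (r i)).filter (s · ≤ s i)) ⊆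
          (releasedIn r a (r j)).filter (s · ≤ s j) := by
        intro k hk
        rcases mem_insert.1 hk with rfl | hk
        · simp [hai.trans hrij]
        · simp only [mem_filter, mem_releasedIn] at hk ⊢
          exact ⟨⟨hk.1.1, hk.1.2.trans hrij⟩, hk.2.trans hij.le⟩
      have hsum := sum_le_sum_of_subset_of_nonneg hsub fun k _ _ => hp k
      rw [sum_insert hj] at hsum
      exact ⟨a, hai.trans hrij, by linarith⟩

theorem exists_flow_le_sum_releasedIn_sub (hp : ∀ i, 0 ≤ p i)
    (hstart : ∀ j, r j ≤ s j) (hdisj : NonOverlapping s p)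
    (hfifo : ∀ i j, s i < s j → r i ≤ r j)
    (hbusy : ∀ j t, r j ≤ t → t < s j → ∃ i, s i ≤ t ∧ t < s i + p i) (j : ι) :
    ∃ a ≤ r j, s j + p j - r j ≤ ∑ i ∈ releasedIn r a (r j), p i - (r j - a) := by
  obtain ⟨a, ha, hj⟩ :=
    exists_completion_le_add_sum_releasedIn_started hp hstart hdisj hfifo hbusy j
  have hsub := sum_le_sum_of_subset_of_nonneg (filter_subset (s · ≤ s j) (releasedIn r a (r j)))
    fun k _ _ => hp k
  exact ⟨a, ha, by linarith⟩

end FIFO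

theorem stmt_19_general (n : ℕ) (hn : 0 < n) (r p : Fin n → ℝ) (D : ℝ)
    (hp : ∀ j, 0 ≤ p j)
    (s : Fin n → ℝ)
    (hstart : ∀ j, r j ≤ s j)
    (hdisj : ∀ i j, i ≠ j → s i + p i ≤ s j ∨ s j + p j ≤ s i)
    (hfifo : ∀ i j, s i < s j → r i ≤ r j)
    (hbusy : ∀ j t, r j ≤ t → t < s j → ∃ i, s i ≤ t ∧ t < s i + p i)
    (hbacklog : ∀ a b : ℝ, a ≤ b →
      ∑ j ∈ Finset.univ.filter (fun j => a ≤ r j ∧ r j ≤ b), p j ≤ (b - a) + D) :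
    (∀ j, s j + p j - r j ≤ D) ∧
    (∀ s' : Fin n → ℝ, (∀ j, r j ≤ s' j) →
      (∀ i j, i ≠ j → s' i + p i ≤ s' j ∨ s' j + p j ≤ s' i) →
      ∀ j, ∃ j', s j + p j - r j ≤ s' j' + p j' - r j') ∧
    (∀ s' : Fin n → ℝ, (∀ j, r j ≤ s' j) →
      (∀ i j, i ≠ j → s' i + p i ≤ s' j ∨ s' j + p j ≤ s' i) →
      ∀ a b : ℝ, a ≤ b → ∃ j,
        (∑ i ∈ Finset.univ.filter (fun i => a ≤ r i ∧ r i ≤ b), p i) - (b - a)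
          ≤ s' j + p j - r j) := by
  have := Fin.pos_iff_nonempty.1 hn
  have fifo_flow := exists_flow_le_sum_releasedIn_sub hp hstart hdisj hfifo hbusy
  refine ⟨fun j => ?_, fun s' hstart' hdisj' j => ?_, fun s' hstart' hdisj' a b hab =>
    exists_flow_ge_sum_releasedIn_sub hp hstart' hdisj' hab⟩
  · obtain ⟨a, ha, hflow⟩ := fifo_flow j
    have hD : ∑ i ∈ releasedIn r a (r j), p i ≤ r j - a + D := hbacklog a (r j) ha
    linarith
  · obtain ⟨a, ha, hflow⟩ := fifo_flow j
    obtain ⟨j', hj'⟩ := exists_flow_ge_sum_releasedIn_sub hp hstart' hdisj' ha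
    exact ⟨j', hflow.trans hj'⟩

/-- Single-machine FIFO: with the backlog condition, FIFO achieves maximum flow
time at most `D`; FIFO is optimal for maximum flow time among all feasible
non-preemptive schedules; and every feasible schedule has maximum flow time at
least `(Σ_{j released in [a,b]} p_j) − (b − a)` for every interval `[a, b]`. -/
theorem stmt_19 (n : ℕ) (hn : 0 < n) (r p : Fin n → ℝ) (D : ℝ) (hD : 0 ≤ D)
    (hr : ∀ j, 0 ≤ r j) (hp : ∀ j, 0 ≤ p j)
    (s : Fin n → ℝ)
    (hstart : ∀ j, r j ≤ s j)
    (hdisj : ∀ i j, i ≠ j → s i + p i ≤ s j ∨ s j + p j ≤ s i)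
    (hfifo : ∀ i j, s i < s j → r i ≤ r j)
    (hbusy : ∀ j t, r j ≤ t → t < s j → ∃ i, s i ≤ t ∧ t < s i + p i)
    (hbacklog : ∀ a b : ℝ, a ≤ b →
      ∑ j ∈ Finset.univ.filter (fun j => a ≤ r j ∧ r j ≤ b), p j ≤ (b - a) + D) :
    (∀ j, s j + p j - r j ≤ D) ∧
    (∀ s' : Fin n → ℝ, (∀ j, r j ≤ s' j) →
      (∀ i j, i ≠ j → s' i + p i ≤ s' j ∨ s' j + p j ≤ s' i) →
      ∀ j, ∃ j', s j + p j - r j ≤ s' j' + p j' - r j') ∧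
    (∀ s' : Fin n → ℝ, (∀ j, r j ≤ s' j) →
      (∀ i j, i ≠ j → s' i + p i ≤ s' j ∨ s' j + p j ≤ s' i) →
      ∀ a b : ℝ, a ≤ b → ∃ j,
        (∑ i ∈ Finset.univ.filter (fun i => a ≤ r i ∧ r i ≤ b), p i) - (b - a)
          ≤ s' j + p j - r j) :=
  stmt_19_general n hn r p D hp s hstart hdisj hfifo hbusy hbacklog
end
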